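/- arXiv:1603.04808 — 2 statements merged into one kernel-verified Lean document; each statement's English description precedes it below -/
import Mathlib

section
/- Let n and r be positive integers with n ≤ r, and let e_0, e_1, …, e_r denote the standard basis vectors of ℤ^{r+1}. For a subset I ⊆ {1, …, r}, set h_I = e_0 − Σ_{i ∈ I} e_i. Suppose a, b_1, …, b_r are integers satisfying a ≥ 0, b_i ≥ 0 for all i, a ≥ b_i for all i, and n·a ≥ Σ_{i=1}^r b_i. Then the vector a·e_0 − Σ_{i=1}^r b_i·e_i can be written as a nonnegative integer linear combination of the vectors e_i for 1 ≤ i ≤ r together with the vectors h_I over subsets I ⊆ {1, …, r} with |I| = n. -/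
open Finset

lemma aux_lemma {M : Type*} [AddCommGroup M] (n r : ℕ) (hn : 0 < n) (hnr : n ≤ r)
    (v0 : M) (v : Fin r → M) :
    ∀ (m : ℕ) (b : Fin r → ℤ), (∀ i, 0 ≤ b i) → (∀ i, b i ≤ (m : ℤ)) →
      (∑ i, b i ≤ (n : ℤ) * m) →
      ∃ (c : Fin r → ℕ) (d : {I : Finset (Fin r) // I.card = n} → ℕ),
        (m : ℤ) • v0 - ∑ i : Fin r, b i • v i
          = (∑ i : Fin r, (c i : ℤ) • v i)
            + ∑ I : {I : Finset (Fin r) // I.card = n},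
                (d I : ℤ) • (v0 - ∑ i ∈ I.1, v i) := by
  intro m
  induction m with
  | zero =>
    intro b hb hba _
    refine ⟨0, 0, ?_⟩
    have hb0 : ∀ i, b i = 0 := fun i => le_antisymm (hba i) (hb i)
    simp [hb0]
  | succ m ih =>
    intro b hb hba hsum
    classical
    set S : Finset (Fin r) := univ.filter (fun i => b i = (m + 1 : ℤ)) with hS
    set P : Finset (Fin r) := univ.filter (fun i => 1 ≤ b i) with hP
    have hSP : S ⊆ P := by
      intro i hi
      simp only [hS, mem_filter, mem_univ, true_and] at hi
      simp only [hP, mem_filter, mem_univ, true_and]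
      omega
    have hScard : S.card ≤ n := by
      by_contra h
      push_neg at h
      have h1 : (S.card : ℤ) * (m + 1) ≤ ∑ i, b i := by
        calc (S.card : ℤ) * (m + 1) = ∑ _i ∈ S, (m + 1 : ℤ) := by
              rw [Finset.sum_const, nsmul_eq_mul]
          _ = ∑ i ∈ S, b i := by
              apply Finset.sum_congr rfl
              intro i hi
              simp only [hS, mem_filter, mem_univ, true_and] at hi
              omega
          _ ≤ ∑ i, b i := Finset.sum_le_sum_of_subset_of_nonneg (Finset.filter_subset _ _)
              (fun i _ _ => hb i)
      have h2 : (n : ℤ) < S.card := by exact_mod_cast h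
      push_cast at hsum h1
      nlinarith [h1, hsum]
    -- choose I
    have hchoice : ∃ I : Finset (Fin r), S ⊆ I ∧ I.card = n ∧ (I ⊆ P ∨ P ⊆ I) := by
      by_cases hcase : n ≤ P.card
      · obtain ⟨I, h1, h2, h3⟩ := exists_subsuperset_card_eq hSP hScard hcase
        exact ⟨I, h1, h3, Or.inl h2⟩
      · obtain ⟨I, h1, h2, h3⟩ := exists_subsuperset_card_eq (subset_univ P)
          (le_of_not_ge hcase) (by simpa using hnr)
        exact ⟨I, hSP.trans h1, h3, Or.inr h1⟩
    obtain ⟨I, hSI, hIcard, hIP⟩ := hchoice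
    set b' : Fin r → ℤ := fun i => if i ∈ I then max (b i - 1) 0 else b i with hb'
    have hb'0 : ∀ i, 0 ≤ b' i := by
      intro i; simp only [hb']; split <;> [omega; exact hb i]
    have hb'le : ∀ i, b' i ≤ (m : ℤ) := by
      intro i
      simp only [hb']
      by_cases hi : i ∈ I
      · simp only [hi, if_true]; have := hba i; push_cast at this ⊢; omega
      · simp only [hi, if_false]
        have hiS : i ∉ S := fun h => hi (hSI h)
        simp only [hS, mem_filter, mem_univ, true_and] at hiS
        have := hba i; push_cast at this ⊢; omega
    -- sum difference
    have hdiff : ∑ i, b i - ∑ i, b' i = ((I ∩ P).card : ℤ) := by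
      rw [← Finset.sum_sub_distrib]
      have hpt : ∀ i : Fin r, b i - b' i = if i ∈ I ∩ P then (1:ℤ) else 0 := by
        intro i
        have hbge := hb i
        simp only [hb', mem_inter, hP, mem_filter, mem_univ, true_and]
        by_cases hi : i ∈ I <;> by_cases hbi : 1 ≤ b i <;>
          simp [hi, hbi] <;> omega
      simp only [hpt]
      rw [Finset.sum_ite_mem, Finset.univ_inter, Finset.sum_const, nsmul_eq_mul, mul_one]
    have hsum' : ∑ i, b' i ≤ (n : ℤ) * m := by
      rcases hIP with hIP | hPI
      · have hIPc : I ∩ P = I := Finset.inter_eq_left.mpr hIP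
        rw [hIPc, hIcard] at hdiff
        push_cast at hsum
        have hexp : (n:ℤ) * ((m:ℤ) + 1) = (n:ℤ) * m + n := by ring
        linarith
      · have hIPc : I ∩ P = P := Finset.inter_eq_right.mpr hPI
        rw [hIPc] at hdiff
        have hPn : P.card ≤ n := by
          have := Finset.card_le_card hPI
          omega
        have hsb : ∑ i, b i ≤ (P.card : ℤ) * (m + 1) := by
          have h1 : ∑ i, b i = ∑ i ∈ P, b i := by
            rw [eq_comm]
            apply Finset.sum_subset (subset_univ P)
            intro i _ hi
            simp only [hP, mem_filter, mem_univ, true_and] at hi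
            have := hb i; omega
          rw [h1]
          calc ∑ _i ∈ P, b _i ≤ ∑ _i ∈ P, (m + 1 : ℤ) :=
                Finset.sum_le_sum (fun i _ => by have := hba i; push_cast at this ⊢; omega)
            _ = (P.card : ℤ) * (m + 1) := by rw [Finset.sum_const, nsmul_eq_mul]
        have hPn' : (P.card : ℤ) ≤ n := by exact_mod_cast hPn
        nlinarith
    obtain ⟨c', d', hcd⟩ := ih b' hb'0 hb'le hsum'
    set extra : Fin r → ℕ := fun i => if i ∈ I ∧ b i = 0 then 1 else 0 with hextra
    set I0 : {I : Finset (Fin r) // I.card = n} := ⟨I, hIcard⟩ with hI0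
    refine ⟨fun i => c' i + extra i, fun J => d' J + if J = I0 then 1 else 0, ?_⟩
    have key : ∀ i : Fin r, b i • v i
        = (if i ∈ I then (1:ℤ) else 0) • v i + b' i • v i - (extra i : ℤ) • v i := by
      intro i
      rw [← add_smul, ← sub_smul]
      congr 1
      have hbge := hb i
      simp only [hb', hextra]
      by_cases hi : i ∈ I <;> by_cases hbi : b i = 0 <;>
        simp [hi, hbi] <;> omega
    have hvec : ((m:ℕ)+1 : ℤ) • v0 - ∑ i, b i • v i
        = (v0 - ∑ i ∈ I, v i) + (∑ i, (extra i : ℤ) • v i)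
          + ((m:ℤ) • v0 - ∑ i, b' i • v i) := by
      have hIsum : ∑ i ∈ I, v i = ∑ i : Fin r, (if i ∈ I then (1:ℤ) else 0) • v i := by
        simp only [ite_smul, one_smul, zero_smul]
        rw [Finset.sum_ite_mem, Finset.univ_inter]
      simp only [key, Finset.sum_sub_distrib, Finset.sum_add_distrib, hIsum]
      have : ((m:ℕ)+1 : ℤ) • v0 = (m : ℤ) • v0 + v0 := by
        rw [add_smul, one_smul]
      rw [this]
      abel
    have hdsum : ∑ J : {I : Finset (Fin r) // I.card = n},
        ((if J = I0 then (1:ℕ) else 0) : ℤ) • (v0 - ∑ i ∈ J.1, v i)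
        = v0 - ∑ i ∈ I, v i := by
      simp only [apply_ite (fun x : ℕ => (x : ℤ)), Nat.cast_one, Nat.cast_zero,
        ite_smul, one_smul, zero_smul]
      rw [Fintype.sum_ite_eq' I0]
    push_cast
    rw [hvec, hcd]
    simp only [add_smul, Finset.sum_add_distrib]
    push_cast at hdsum
    rw [hdsum]
    abel

/-- Lemma 2.5 of Coskun–Lesieutre–Ottem: if `a ≥ 0`, `0 ≤ b i ≤ a` and
`∑ b i ≤ n * a`, then the vector `a • e₀ - ∑ bᵢ • eᵢ` in `ℤ^(r+1)` is a
nonnegative integer combination of the `eᵢ` (1 ≤ i ≤ r) and the vectors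
`h_I = e₀ - ∑_{i∈I} eᵢ` over `n`-element subsets `I ⊆ {1,…,r}`. -/
theorem stmt_0 (n r : ℕ) (hn : 0 < n) (hr : 0 < r) (hnr : n ≤ r)
    (a : ℤ) (b : Fin r → ℤ)
    (ha : 0 ≤ a) (hb : ∀ i, 0 ≤ b i) (hba : ∀ i, b i ≤ a)
    (hsum : ∑ i, b i ≤ (n : ℤ) * a) :
    ∃ (c : Fin r → ℕ) (d : {I : Finset (Fin r) // I.card = n} → ℕ),
      a • (Pi.single (0 : Fin (r + 1)) (1 : ℤ) : Fin (r + 1) → ℤ)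
          - ∑ i : Fin r, b i • (Pi.single i.succ (1 : ℤ) : Fin (r + 1) → ℤ)
        = (∑ i : Fin r, (c i : ℤ) • (Pi.single i.succ (1 : ℤ) : Fin (r + 1) → ℤ))
          + ∑ I : {I : Finset (Fin r) // I.card = n},
              (d I : ℤ) • ((Pi.single (0 : Fin (r + 1)) (1 : ℤ) : Fin (r + 1) → ℤ)
                - ∑ i ∈ I.1, (Pi.single i.succ (1 : ℤ) : Fin (r + 1) → ℤ)) := by
  obtain ⟨m, rfl⟩ : ∃ m : ℕ, a = (m : ℤ) := ⟨a.toNat, (Int.toNat_of_nonneg ha).symm⟩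
  exact aux_lemma n r hn hnr _ _ m b hb hba hsum
end

section
/- Let n and r be positive integers with n ≤ r. Suppose a, b_1, …, b_r are real numbers with 0 ≤ b_i ≤ a for all i and Σ_{i=1}^r b_i ≤ n·a. Then there exists a family of nonnegative real numbers (c_I), indexed by the n-element subsets I of {1, …, r}, such that Σ_I c_I = a and, for every index i ∈ {1, …, r}, Σ_{I ∋ i} c_I ≥ b_i. -/
open Finset Set

/-!
The `b` admitting such weights form a closed convex lower set. The polytope
`{b | 0 ≤ b ≤ a, ∑ b ≤ n a}` is the closed convex hull of its extreme points (Krein–Milman),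
so it suffices to treat an extreme point `b`. Two coordinates `i ≠ j` of `b` strictly between
`0` and `a` could be moved by `±ε` in opposite directions without leaving the polytope, so at most
one coordinate is fractional. Then `∑ bᵢ ≤ n a` forces `b` to have at most `n` nonzero
coordinates, and `b` is dominated by `a` times the indicator of a single `n`-set.
-/

lemma Convex.lowerClosure {𝕜 E : Type*} [Semiring 𝕜] [PartialOrder 𝕜] [AddCommMonoid E]
    [PartialOrder E] [IsOrderedAddMonoid E] [Module 𝕜 E] [PosSMulMono 𝕜 E] {s : Set E}
    (hs : Convex 𝕜 s) : Convex 𝕜 (lowerClosure s : Set E) := by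
  rintro x ⟨x', hx', hxx'⟩ y ⟨y', hy', hyy'⟩ p q hp hq hpq
  exact ⟨p • x' + q • y', hs hx' hy' hp hq hpq,
    add_le_add (smul_le_smul_of_nonneg_left hxx' hp) (smul_le_smul_of_nonneg_left hyy' hq)⟩

section

variable {ι : Type*} [Fintype ι] {n : ℕ} {a : ℝ}

variable (ι n a) in
def coverWeights : Set ({I : Finset ι // I.card = n} → ℝ) :=
  Ici 0 ∩ {c | ∑ I, c I = a}

lemma isCompact_coverWeights : IsCompact (coverWeights ι n a) := by
  refine (isCompact_Icc (a := 0) (b := fun _ => a)).of_isClosed_subset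
    (isClosed_Ici.inter (isClosed_eq (by fun_prop) continuous_const)) ?_
  rintro c ⟨hc, rfl⟩
  exact ⟨hc, fun I => single_le_sum (fun J _ => hc J) (mem_univ I)⟩

lemma convex_coverWeights : Convex ℝ (coverWeights ι n a) := by
  refine (convex_Ici 0).inter ?_
  rintro c hc d hd s t - - hst
  simp_all [sum_add_distrib, ← mul_sum, ← add_mul]

variable (n a) in
def truncatedBox : Set (ι → ℝ) :=
  Icc 0 (fun _ => a) ∩ {b | ∑ i, b i ≤ n * a}

lemma isCompact_truncatedBox : IsCompact (truncatedBox n a : Set (ι → ℝ)) :=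
  isCompact_Icc.inter_right (isClosed_le (by fun_prop) continuous_const)

lemma convex_truncatedBox : Convex ℝ (truncatedBox n a : Set (ι → ℝ)) := by
  refine (convex_Icc _ _).inter ?_
  rintro c hc d hd s t hs ht hst
  simp only [mem_ofPred_eq, Pi.add_apply, Pi.smul_apply, smul_eq_mul, sum_add_distrib,
    ← mul_sum] at *
  calc s * ∑ i, c i + t * ∑ i, d i ≤ s * (n * a) + t * (n * a) := by gcongr
    _ = n * a := by rw [← add_mul, hst, one_mul]

lemma card_pos_le_of_mem_truncatedBox {b : ι → ℝ} (hb : b ∈ truncatedBox n a)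
    (hfrac : ∀ i j, b i ∈ Ioo 0 a → b j ∈ Ioo 0 a → i = j) : #{i | 0 < b i} ≤ n := by
  obtain ⟨⟨hb0, hba⟩, hsum⟩ := hb
  set S : Finset ι := {i | 0 < b i}
  rcases S.eq_empty_or_nonempty with hS | ⟨k, hk⟩
  · simp [hS]
  have ha : 0 < a := (mem_filter.1 hk).2.trans_le (hba k)
  have hfull : ∀ i ∈ S, b i ∉ Ioo 0 a → a - b i = 0 := fun i hi hfr => by
    simp only [Set.mem_Ioo, not_and, not_lt] at hfr
    linarith [hba i, hfr (mem_filter.1 hi).2]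
  have hdefect : ∑ i ∈ S, (a - b i) < a := by
    by_cases hfr : ∃ k, b k ∈ Ioo 0 a
    · obtain ⟨k, hk⟩ := hfr
      rw [sum_eq_single k (fun i hi hik => hfull i hi fun h => hik (hfrac i k h hk))
        fun hkS => absurd (mem_filter.2 ⟨mem_univ k, hk.1⟩) hkS]
      linarith [hk.1]
    · rwa [sum_eq_zero fun i hi => hfull i hi fun h => hfr ⟨i, h⟩]
  have hSsum : ∑ i ∈ S, b i ≤ n * a :=
    (sum_le_sum_of_subset_of_nonneg (subset_univ S) fun i _ _ => hb0 i).trans hsum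
  rw [sum_sub_distrib, sum_const, nsmul_eq_mul] at hdefect
  have : (#S : ℝ) < n + 1 := lt_of_mul_lt_mul_right (by linarith) ha.le
  exact_mod_cast Nat.lt_succ_iff.mp (by exact_mod_cast this)

variable [DecidableEq ι]

def coverMap (n : ℕ) : ({I : Finset ι // I.card = n} → ℝ) →ₗ[ℝ] ι → ℝ :=
  LinearMap.pi fun i => ∑ I with i ∈ I.1, LinearMap.proj I

@[simp]
lemma coverMap_apply (c : {I : Finset ι // I.card = n} → ℝ) (i : ι) :
    coverMap n c i = ∑ I with i ∈ I.1, c I := by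
  simp [coverMap]

variable (n a) in
def coverable : Set (ι → ℝ) :=
  lowerClosure (coverMap n '' coverWeights ι n a)

lemma mem_coverable {b : ι → ℝ} :
    b ∈ coverable n a ↔ ∃ c : {I : Finset ι // I.card = n} → ℝ,
      (∀ I, 0 ≤ c I) ∧ ∑ I, c I = a ∧ ∀ i, b i ≤ ∑ I with i ∈ I.1, c I := by
  simp [coverable, coverWeights, Pi.le_def, and_assoc]

lemma isLowerSet_coverable : IsLowerSet (coverable n a : Set (ι → ℝ)) :=
  (lowerClosure _).lower

lemma isClosed_coverable : IsClosed (coverable n a : Set (ι → ℝ)) := by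
  have hK := (isCompact_coverWeights (ι := ι) (n := n) (a := a)).image
    (coverMap n).continuous_of_finiteDimensional
  exact hK.isClosed.lowerClosure_pi hK.isBounded.bddAbove

lemma convex_coverable : Convex ℝ (coverable n a : Set (ι → ℝ)) :=
  (convex_coverWeights.linear_image (coverMap n)).lowerClosure

lemma indicator_mem_coverable {S : Finset ι} (ha : 0 ≤ a) (hS : S.card ≤ n)
    (hn : n ≤ Fintype.card ι) : (fun i => if i ∈ S then a else 0) ∈ coverable n a := by
  obtain ⟨I₀, hSI₀, hI₀⟩ := exists_superset_card_eq hS hn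
  refine mem_coverable.2 ⟨Pi.single ⟨I₀, hI₀⟩ a, fun I => ?_, by simp, fun i => ?_⟩
  · by_cases h : I = ⟨I₀, hI₀⟩ <;> simp [h, ha]
  · rw [sum_pi_single']
    by_cases hi : i ∈ S
    · simp [hi, hSI₀ hi]
    · simp only [hi, if_false]
      positivity

lemma add_single_sub_single_mem_truncatedBox {b : ι → ℝ} (hb : b ∈ truncatedBox n a) {i j : ι}
    (hij : i ≠ j) {ε : ℝ} (hε : 0 ≤ ε) (hi : b i + ε ≤ a) (hj : ε ≤ b j) :
    b + (Pi.single i ε - Pi.single j ε) ∈ truncatedBox n a := by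
  obtain ⟨⟨hb0, hba⟩, hsum⟩ := hb
  refine ⟨⟨fun x => ?_, fun x => ?_⟩, ?_⟩
  · rcases eq_or_ne x i with rfl | hxi
    · simpa [hij] using add_nonneg (hb0 x) hε
    rcases eq_or_ne x j with rfl | hxj
    · simpa [hxi] using hj
    · simpa [hxi, hxj] using hb0 x
  · rcases eq_or_ne x i with rfl | hxi
    · simpa [hij] using hi
    rcases eq_or_ne x j with rfl | hxj
    · simpa [hxi] using (sub_le_self _ hε).trans (hba x)
    · simpa [hxi, hxj] using hba x
  · simpa [sum_add_distrib] using hsum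

lemma eq_of_mem_extremePoints_truncatedBox {b : ι → ℝ}
    (hb : b ∈ (truncatedBox n a).extremePoints ℝ) {i j : ι} (hi : b i ∈ Ioo 0 a)
    (hj : b j ∈ Ioo 0 a) : i = j := by
  by_contra hij
  set ε := min (min (b i) (a - b i)) (min (b j) (a - b j))
  have hε : 0 < ε := by simp only [ε, lt_min_iff, sub_pos]; exact ⟨⟨hi.1, hi.2⟩, hj.1, hj.2⟩
  have hεi : ε ≤ b i := (min_le_left _ _).trans (min_le_left _ _)
  have hεi' : ε ≤ a - b i := (min_le_left _ _).trans (min_le_right _ _)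
  have hεj : ε ≤ b j := (min_le_right _ _).trans (min_le_left _ _)
  have hεj' : ε ≤ a - b j := (min_le_right _ _).trans (min_le_right _ _)
  set v : ι → ℝ := Pi.single i ε - Pi.single j ε
  have hplus : b + v ∈ truncatedBox n a :=
    add_single_sub_single_mem_truncatedBox hb.1 hij hε.le (by linarith) hεj
  have hminus : b - v ∈ truncatedBox n a := by
    rw [sub_eq_add_neg, neg_sub]
    exact add_single_sub_single_mem_truncatedBox hb.1 (Ne.symm hij) hε.le (by linarith) hεi
  have hseg : b ∈ openSegment ℝ (b + v) (b - v) :=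
    ⟨1 / 2, 1 / 2, by norm_num, by norm_num, by norm_num, by module⟩
  have hv : b + v = b := (mem_extremePoints.1 hb).2 _ hplus _ hminus hseg |>.1
  simpa [v, hij, hε.ne'] using congr_fun hv i

lemma extremePoints_truncatedBox_subset_coverable (ha : 0 ≤ a) (hn : n ≤ Fintype.card ι) :
    (truncatedBox n a : Set (ι → ℝ)).extremePoints ℝ ⊆ coverable n a := by
  intro b hb
  refine isLowerSet_coverable (fun i => ?_) (indicator_mem_coverable ha
    (card_pos_le_of_mem_truncatedBox hb.1 fun i j => eq_of_mem_extremePoints_truncatedBox hb) hn)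
  split_ifs with h
  · exact hb.1.1.2 i
  · simpa using h

lemma truncatedBox_subset_coverable (ha : 0 ≤ a) (hn : n ≤ Fintype.card ι) :
    (truncatedBox n a : Set (ι → ℝ)) ⊆ coverable n a := by
  rw [← closure_convexHull_extremePoints isCompact_truncatedBox convex_truncatedBox]
  exact closure_minimal (convexHull_min (extremePoints_truncatedBox_subset_coverable ha hn)
    convex_coverable) isClosed_coverable

end

/-- Real reformulation of Lemma 2.5: given `0 ≤ bᵢ ≤ a` and `∑ bᵢ ≤ n·a`,
there are nonnegative weights `c_I` on the `n`-element subsets `I` of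
`{1,…,r}` with `∑ c_I = a` and `∑_{I ∋ i} c_I ≥ bᵢ` for every `i`. -/
theorem stmt_1 (n r : ℕ) (hn : 0 < n) (hnr : n ≤ r)
    (a : ℝ) (b : Fin r → ℝ)
    (hb0 : ∀ i, 0 ≤ b i) (hba : ∀ i, b i ≤ a)
    (hsum : ∑ i, b i ≤ (n : ℝ) * a) :
    ∃ c : {I : Finset (Fin r) // I.card = n} → ℝ,
      (∀ I, 0 ≤ c I) ∧
      (∑ I : {I : Finset (Fin r) // I.card = n}, c I) = a ∧
      ∀ i : Fin r,
        b i ≤ ∑ I ∈ Finset.univ.filter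
            (fun I : {I : Finset (Fin r) // I.card = n} => i ∈ I.1), c I := by
  have ha : 0 ≤ a := (hb0 ⟨0, hn.trans_le hnr⟩).trans (hba _)
  have hb : b ∈ truncatedBox n a := ⟨⟨hb0, hba⟩, hsum⟩
  exact mem_coverable.1 (truncatedBox_subset_coverable ha (by simpa using hnr) hb)
end
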